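/- Every optimal decision rule d* of the auxiliary MDP satisfies d*(s) ≠ 0 for every state s ∈ Ŝ with s ∉ {(0,0), (N,N)}. -/
import Mathlib


namespace AuxMDP

/-- The action labels of the auxiliary MDP. -/
inductive Lab
  | a11 | a12 | a21 | a22 | a11p | a12p | a21p | a22p | a0 | atil | zero
  deriving DecidableEq

/-- Side lengths in `{2, …, N-2} ∪ {N}`. -/
def goodIdx (N i : ℕ) : Prop := (2 ≤ i ∧ i ≤ N - 2) ∨ i = N

instance (N i : ℕ) : Decidable (goodIdx N i) := by unfold goodIdx; infer_instance

/-- The state space `Ŝ` of the auxiliary MDP. -/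
def ShatP (N : ℕ) (s : ℕ × ℕ) : Prop :=
  (goodIdx N s.1 ∧ goodIdx N s.2) ∨ s = (0, 0)

instance (N : ℕ) (s : ℕ × ℕ) : Decidable (ShatP N s) := by unfold ShatP; infer_instance

/-- The state space as a `Finset`. -/
def ShatF (N : ℕ) : Finset (ℕ × ℕ) :=
  (Finset.range (N + 1) ×ˢ Finset.range (N + 1)).filter (ShatP N)

/-- The admissible action set `Â(s)`. -/
def ActOK (N : ℕ) (s : ℕ × ℕ) (a : Lab) : Prop :=
  if s = (0, 0) ∨ s = (N, N) then a = Lab.zero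
  else
    match a with
    | Lab.zero => True
    | Lab.a11 => 3 ≤ s.1 ∧ s.2 ≤ N - 2
    | Lab.a12 => 3 ≤ s.1 ∧ s.2 ≤ N - 3
    | Lab.a11p => s.1 ≤ N - 2 ∧ s.2 ≤ N - 2
    | Lab.a12p => s.1 ≤ N - 2 ∧ s.2 ≤ N - 3
    | Lab.a21 => 3 ≤ s.2 ∧ s.1 ≤ N - 2
    | Lab.a22 => 3 ≤ s.2 ∧ s.1 ≤ N - 3
    | Lab.a21p => s.2 ≤ N - 2 ∧ s.1 ≤ N - 2
    | Lab.a22p => s.2 ≤ N - 2 ∧ s.1 ≤ N - 3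
    | Lab.a0 => s.1 ≤ N - 2 ∧ s.2 ≤ N - 2
    | Lab.atil => s.1 ≤ N - 2 ∧ s.2 ≤ N - 2

/-- Kernel of the action `a11` (flip at distance 1 from the horizontal side,
away from the corners). -/
noncomputable def ker11 (N : ℕ) (s s' : ℕ × ℕ) : ℝ :=
  if s.2 ≤ N - 3 then
    (if s' = s then 1/3 else if s' = (s.1, s.2 + 1) then 2/3 else 0)
  else if s.2 = N - 2 then
    (if s' = s then 1/4 else if s' = (s.1, N) then 3/4 else 0)
  else 0

/-- Kernel of the action `a11'`. -/
noncomputable def ker11p (N : ℕ) (s s' : ℕ × ℕ) : ℝ :=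
  if s.2 ≤ N - 3 then
    (if s' = s then 1/2 else if s' = (s.1, s.2 + 1) then 1/2 else 0)
  else if s.2 = N - 2 then
    (if s' = s then 1/3 else if s' = (s.1, N) then 2/3 else 0)
  else 0

/-- Kernel of the action `a12`. -/
noncomputable def ker12 (N : ℕ) (s s' : ℕ × ℕ) : ℝ :=
  if s.2 ≤ N - 4 then
    (if s' = s then 5/9 else if s' = (s.1, s.2 + 1) then 7/27
     else if s' = (s.1, s.2 + 2) then 5/27 else 0)
  else if s.2 = N - 3 then
    (if s' = s then 7/18 else if s' = (s.1, N - 2) then 31/144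
     else if s' = (s.1, N) then 19/48 else 0)
  else 0

/-- Kernel of the action `a12'`. -/
noncomputable def ker12p (N : ℕ) (s s' : ℕ × ℕ) : ℝ :=
  if s.2 ≤ N - 4 then
    (if s' = s then 5/8 else if s' = (s.1, s.2 + 1) then 1/4
     else if s' = (s.1, s.2 + 2) then 1/8 else 0)
  else if s.2 = N - 3 then
    (if s' = s then 4/9 else if s' = (s.1, N - 2) then 5/27
     else if s' = (s.1, N) then 10/27 else 0)
  else 0

/-- Kernel of the action `a0` (diagonal flip). -/
noncomputable def ker0 (N : ℕ) (s s' : ℕ × ℕ) : ℝ :=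
  if s.1 ≤ N - 3 ∧ s.2 ≤ N - 3 then
    (if s' = s then 4/9 else if s' = (s.1 + 1, s.2) then 1/9
     else if s' = (s.1, s.2 + 1) then 1/9
     else if s' = (s.1 + 1, s.2 + 1) then 1/3 else 0)
  else if s.1 ≤ N - 3 ∧ s.2 = N - 2 then
    (if s' = s then 5/12 else if s' = (s.1, N) then 1/8
     else if s' = (s.1 + 1, N - 2) then 1/9
     else if s' = (s.1 + 1, N) then 25/72 else 0)
  else if s.1 = N - 2 ∧ s.2 ≤ N - 3 then
    (if s' = s then 5/12 else if s' = (N, s.2) then 1/8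
     else if s' = (N - 2, s.2 + 1) then 1/9
     else if s' = (N, s.2 + 1) then 25/72 else 0)
  else if s.1 = N - 2 ∧ s.2 = N - 2 then
    (if s' = s then 7/18 else if s' = (N, N - 2) then 1/8
     else if s' = (N - 2, N) then 1/8
     else if s' = (N, N) then 13/36 else 0)
  else 0

/-- Kernel of the action `ã` (flip a corner spin of the rectangle). -/
noncomputable def kerTil (N : ℕ) (s s' : ℕ × ℕ) : ℝ :=
  if 3 ≤ s.1 ∧ 3 ≤ s.2 then (if s' = s then 1 else 0)
  else if s.1 = 2 ∧ 3 ≤ s.2 then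
    (if s' = s then 1/2 else if s' = (2, s.2 - 1) then 1/2 else 0)
  else if 3 ≤ s.1 ∧ s.2 = 2 then
    (if s' = s then 1/2 else if s' = (s.1 - 1, 2) then 1/2 else 0)
  else if s.1 = 2 ∧ s.2 = 2 then
    (if s' = s then 1/3 else if s' = ((0 : ℕ), (0 : ℕ)) then 2/3 else 0)
  else 0

/-- Coordinate swap. -/
def swp (s : ℕ × ℕ) : ℕ × ℕ := (s.2, s.1)

/-- The transition kernel `P̂(s' | s, a)` of the auxiliary MDP. -/
noncomputable def Phat (N : ℕ) (s : ℕ × ℕ) (a : Lab) (s' : ℕ × ℕ) : ℝ :=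
  match a with
  | Lab.zero => if s' = s then 1 else 0
  | Lab.a11 => ker11 N s s'
  | Lab.a12 => ker12 N s s'
  | Lab.a11p => ker11p N s s'
  | Lab.a12p => ker12p N s s'
  | Lab.a21 => ker11 N (swp s) (swp s')
  | Lab.a22 => ker12 N (swp s) (swp s')
  | Lab.a21p => ker11p N (swp s) (swp s')
  | Lab.a22p => ker12p N (swp s) (swp s')
  | Lab.a0 => ker0 N s s'
  | Lab.atil => kerTil N s s'

/-- The reward function of the auxiliary MDP. -/
noncomputable def rhat (N : ℕ) (s : ℕ × ℕ) : ℝ := if s = (N, N) then 1 else 0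

/-- `d` is a decision rule: it selects admissible actions on `Ŝ`. -/
def IsRule (N : ℕ) (d : ℕ × ℕ → Lab) : Prop :=
  ∀ s : ℕ × ℕ, ShatP N s → ActOK N s (d s)

/-- `v` is the value function of the decision rule `d` (the unique solution
of the evaluation equations on `Ŝ`). -/
def IsValue (N : ℕ) (lam : ℝ) (d : ℕ × ℕ → Lab) (v : ℕ × ℕ → ℝ) : Prop :=
  ∀ s ∈ ShatF N, v s = rhat N s + lam * ∑ s' ∈ ShatF N, Phat N s (d s) s' * v s'

/-- `d` is an optimal decision rule: its value function dominates the value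
function of every decision rule at every state of `Ŝ`. -/
def IsOptimal (N : ℕ) (lam : ℝ) (d : ℕ × ℕ → Lab) : Prop :=
  IsRule N d ∧
  ∀ vd : ℕ × ℕ → ℝ, IsValue N lam d vd →
    ∀ d' : ℕ × ℕ → Lab, IsRule N d' →
      ∀ v' : ℕ × ℕ → ℝ, IsValue N lam d' v' →
        ∀ s : ℕ × ℕ, ShatP N s → v' s ≤ vd s

section Aux

open Finset

variable {α : Type*} [DecidableEq α]

lemma sum_pt1 (F : Finset α) (p : α) {x : ℝ} (hx : 0 ≤ x) :
    ∑ s ∈ F, (if s = p then x else 0) ≤ x := by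
  rw [Finset.sum_ite_eq' F p (fun _ => x)]
  split_ifs <;> simp [hx]

lemma sum_pt2 (F : Finset α) (p q : α) {x y : ℝ} (hx : 0 ≤ x) (hy : 0 ≤ y) :
    ∑ s ∈ F, (if s = p then x else if s = q then y else 0) ≤ x + y := by
  calc ∑ s ∈ F, (if s = p then x else if s = q then y else 0)
      ≤ ∑ s ∈ F, ((if s = p then x else 0) + (if s = q then y else 0)) := by
        apply Finset.sum_le_sum; intro i _; split_ifs <;> simp [hx, hy]
    _ = _ := Finset.sum_add_distrib
    _ ≤ x + y := add_le_add (sum_pt1 F p hx) (sum_pt1 F q hy)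

lemma sum_pt3 (F : Finset α) (p q r : α) {x y z : ℝ}
    (hx : 0 ≤ x) (hy : 0 ≤ y) (hz : 0 ≤ z) :
    ∑ s ∈ F, (if s = p then x else if s = q then y else if s = r then z else 0)
      ≤ x + y + z := by
  calc ∑ s ∈ F, (if s = p then x else if s = q then y else if s = r then z else 0)
      ≤ ∑ s ∈ F, ((if s = p then x else 0) +
          (if s = q then y else if s = r then z else 0)) := by
        apply Finset.sum_le_sum; intro i _; split_ifs <;> simp [hx, hy, hz]
    _ = _ := Finset.sum_add_distrib
    _ ≤ x + (y + z) := add_le_add (sum_pt1 F p hx) (sum_pt2 F q r hy hz)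
    _ = x + y + z := by ring

lemma sum_pt4 (F : Finset α) (p q r t : α) {x y z w : ℝ}
    (hx : 0 ≤ x) (hy : 0 ≤ y) (hz : 0 ≤ z) (hw : 0 ≤ w) :
    ∑ s ∈ F, (if s = p then x else if s = q then y else if s = r then z
      else if s = t then w else 0) ≤ x + y + z + w := by
  calc ∑ s ∈ F, (if s = p then x else if s = q then y else if s = r then z
        else if s = t then w else 0)
      ≤ ∑ s ∈ F, ((if s = p then x else 0) +
          (if s = q then y else if s = r then z else if s = t then w else 0)) := by
        apply Finset.sum_le_sum; intro i _; split_ifs <;> simp [hx, hy, hz, hw]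
    _ = _ := Finset.sum_add_distrib
    _ ≤ x + (y + z + w) := add_le_add (sum_pt1 F p hx) (sum_pt3 F q r t hy hz hw)
    _ = x + y + z + w := by ring

end Aux
lemma swp_eq_iff (x p : ℕ × ℕ) : swp x = p ↔ x = swp p := by
  constructor <;> rintro rfl <;> simp [swp]

lemma Phat_nonneg (N : ℕ) (s : ℕ × ℕ) (a : Lab) (s' : ℕ × ℕ) :
    0 ≤ Phat N s a s' := by
  cases a <;>
    simp only [Phat, ker11, ker12, ker11p, ker12p, ker0, kerTil] <;>
    split_ifs <;> norm_num

lemma ker11_sum_le (N : ℕ) (t : ℕ × ℕ) (F : Finset (ℕ × ℕ)) :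
    ∑ s' ∈ F, ker11 N t s' ≤ 1 := by
  unfold ker11
  rcases le_or_gt t.2 (N - 3) with h1 | h1
  · simp only [if_pos h1]
    exact le_trans (sum_pt2 F _ _ (by norm_num) (by norm_num)) (by norm_num)
  · simp only [if_neg (by omega : ¬ t.2 ≤ N - 3)]
    by_cases h2 : t.2 = N - 2
    · simp only [if_pos h2]
      exact le_trans (sum_pt2 F _ _ (by norm_num) (by norm_num)) (by norm_num)
    · simp [h2]

lemma ker11_swp_sum_le (N : ℕ) (t : ℕ × ℕ) (F : Finset (ℕ × ℕ)) :
    ∑ s' ∈ F, ker11 N t (swp s') ≤ 1 := by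
  unfold ker11
  simp only [swp_eq_iff]
  rcases le_or_gt t.2 (N - 3) with h1 | h1
  · simp only [if_pos h1]
    exact le_trans (sum_pt2 F _ _ (by norm_num) (by norm_num)) (by norm_num)
  · simp only [if_neg (by omega : ¬ t.2 ≤ N - 3)]
    by_cases h2 : t.2 = N - 2
    · simp only [if_pos h2]
      exact le_trans (sum_pt2 F _ _ (by norm_num) (by norm_num)) (by norm_num)
    · simp [h2]

lemma ker11p_sum_le (N : ℕ) (t : ℕ × ℕ) (F : Finset (ℕ × ℕ)) :
    ∑ s' ∈ F, ker11p N t s' ≤ 1 := by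
  unfold ker11p
  rcases le_or_gt t.2 (N - 3) with h1 | h1
  · simp only [if_pos h1]
    exact le_trans (sum_pt2 F _ _ (by norm_num) (by norm_num)) (by norm_num)
  · simp only [if_neg (by omega : ¬ t.2 ≤ N - 3)]
    by_cases h2 : t.2 = N - 2
    · simp only [if_pos h2]
      exact le_trans (sum_pt2 F _ _ (by norm_num) (by norm_num)) (by norm_num)
    · simp [h2]

lemma ker11p_swp_sum_le (N : ℕ) (t : ℕ × ℕ) (F : Finset (ℕ × ℕ)) :
    ∑ s' ∈ F, ker11p N t (swp s') ≤ 1 := by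
  unfold ker11p
  simp only [swp_eq_iff]
  rcases le_or_gt t.2 (N - 3) with h1 | h1
  · simp only [if_pos h1]
    exact le_trans (sum_pt2 F _ _ (by norm_num) (by norm_num)) (by norm_num)
  · simp only [if_neg (by omega : ¬ t.2 ≤ N - 3)]
    by_cases h2 : t.2 = N - 2
    · simp only [if_pos h2]
      exact le_trans (sum_pt2 F _ _ (by norm_num) (by norm_num)) (by norm_num)
    · simp [h2]

lemma ker12_sum_le (N : ℕ) (t : ℕ × ℕ) (F : Finset (ℕ × ℕ)) :
    ∑ s' ∈ F, ker12 N t s' ≤ 1 := by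
  unfold ker12
  rcases le_or_gt t.2 (N - 4) with h1 | h1
  · simp only [if_pos h1]
    exact le_trans (sum_pt3 F _ _ _ (by norm_num) (by norm_num) (by norm_num)) (by norm_num)
  · simp only [if_neg (by omega : ¬ t.2 ≤ N - 4)]
    by_cases h2 : t.2 = N - 3
    · simp only [if_pos h2]
      exact le_trans (sum_pt3 F _ _ _ (by norm_num) (by norm_num) (by norm_num)) (by norm_num)
    · simp [h2]

lemma ker12_swp_sum_le (N : ℕ) (t : ℕ × ℕ) (F : Finset (ℕ × ℕ)) :
    ∑ s' ∈ F, ker12 N t (swp s') ≤ 1 := by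
  unfold ker12
  simp only [swp_eq_iff]
  rcases le_or_gt t.2 (N - 4) with h1 | h1
  · simp only [if_pos h1]
    exact le_trans (sum_pt3 F _ _ _ (by norm_num) (by norm_num) (by norm_num)) (by norm_num)
  · simp only [if_neg (by omega : ¬ t.2 ≤ N - 4)]
    by_cases h2 : t.2 = N - 3
    · simp only [if_pos h2]
      exact le_trans (sum_pt3 F _ _ _ (by norm_num) (by norm_num) (by norm_num)) (by norm_num)
    · simp [h2]

lemma ker12p_sum_le (N : ℕ) (t : ℕ × ℕ) (F : Finset (ℕ × ℕ)) :
    ∑ s' ∈ F, ker12p N t s' ≤ 1 := by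
  unfold ker12p
  rcases le_or_gt t.2 (N - 4) with h1 | h1
  · simp only [if_pos h1]
    exact le_trans (sum_pt3 F _ _ _ (by norm_num) (by norm_num) (by norm_num)) (by norm_num)
  · simp only [if_neg (by omega : ¬ t.2 ≤ N - 4)]
    by_cases h2 : t.2 = N - 3
    · simp only [if_pos h2]
      exact le_trans (sum_pt3 F _ _ _ (by norm_num) (by norm_num) (by norm_num)) (by norm_num)
    · simp [h2]

lemma ker12p_swp_sum_le (N : ℕ) (t : ℕ × ℕ) (F : Finset (ℕ × ℕ)) :
    ∑ s' ∈ F, ker12p N t (swp s') ≤ 1 := by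
  unfold ker12p
  simp only [swp_eq_iff]
  rcases le_or_gt t.2 (N - 4) with h1 | h1
  · simp only [if_pos h1]
    exact le_trans (sum_pt3 F _ _ _ (by norm_num) (by norm_num) (by norm_num)) (by norm_num)
  · simp only [if_neg (by omega : ¬ t.2 ≤ N - 4)]
    by_cases h2 : t.2 = N - 3
    · simp only [if_pos h2]
      exact le_trans (sum_pt3 F _ _ _ (by norm_num) (by norm_num) (by norm_num)) (by norm_num)
    · simp [h2]

lemma ker0_sum_le (N : ℕ) (t : ℕ × ℕ) (F : Finset (ℕ × ℕ)) :
    ∑ s' ∈ F, ker0 N t s' ≤ 1 := by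
  unfold ker0
  by_cases h1 : t.1 ≤ N - 3 ∧ t.2 ≤ N - 3
  · simp only [if_pos h1]
    exact le_trans (sum_pt4 F _ _ _ _ (by norm_num) (by norm_num) (by norm_num) (by norm_num))
      (by norm_num)
  · simp only [if_neg h1]
    by_cases h2 : t.1 ≤ N - 3 ∧ t.2 = N - 2
    · simp only [if_pos h2]
      exact le_trans (sum_pt4 F _ _ _ _ (by norm_num) (by norm_num) (by norm_num) (by norm_num))
        (by norm_num)
    · simp only [if_neg h2]
      by_cases h3 : t.1 = N - 2 ∧ t.2 ≤ N - 3
      · simp only [if_pos h3]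
        exact le_trans (sum_pt4 F _ _ _ _ (by norm_num) (by norm_num) (by norm_num) (by norm_num))
          (by norm_num)
      · simp only [if_neg h3]
        by_cases h4 : t.1 = N - 2 ∧ t.2 = N - 2
        · simp only [if_pos h4]
          exact le_trans (sum_pt4 F _ _ _ _ (by norm_num) (by norm_num) (by norm_num) (by norm_num))
            (by norm_num)
        · simp [h4]

lemma kerTil_sum_le (N : ℕ) (t : ℕ × ℕ) (F : Finset (ℕ × ℕ)) :
    ∑ s' ∈ F, kerTil N t s' ≤ 1 := by
  unfold kerTil
  by_cases h1 : 3 ≤ t.1 ∧ 3 ≤ t.2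
  · simp only [if_pos h1]
    exact sum_pt1 F _ (by norm_num)
  · simp only [if_neg h1]
    by_cases h2 : t.1 = 2 ∧ 3 ≤ t.2
    · simp only [if_pos h2]
      exact le_trans (sum_pt2 F _ _ (by norm_num) (by norm_num)) (by norm_num)
    · simp only [if_neg h2]
      by_cases h3 : 3 ≤ t.1 ∧ t.2 = 2
      · simp only [if_pos h3]
        exact le_trans (sum_pt2 F _ _ (by norm_num) (by norm_num)) (by norm_num)
      · simp only [if_neg h3]
        by_cases h4 : t.1 = 2 ∧ t.2 = 2
        · simp only [if_pos h4]
          exact le_trans (sum_pt2 F _ _ (by norm_num) (by norm_num)) (by norm_num)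
        · simp [h4]

lemma Phat_sum_le_one (N : ℕ) (s : ℕ × ℕ) (a : Lab) (F : Finset (ℕ × ℕ)) :
    ∑ s' ∈ F, Phat N s a s' ≤ 1 := by
  cases a <;> simp only [Phat]
  case a11 => exact ker11_sum_le N s F
  case a12 => exact ker12_sum_le N s F
  case a21 => exact ker11_swp_sum_le N (swp s) F
  case a22 => exact ker12_swp_sum_le N (swp s) F
  case a11p => exact ker11p_sum_le N s F
  case a12p => exact ker12p_sum_le N s F
  case a21p => exact ker11p_swp_sum_le N (swp s) F
  case a22p => exact ker12p_swp_sum_le N (swp s) F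
  case a0 => exact ker0_sum_le N s F
  case atil => exact kerTil_sum_le N s F
  case zero => exact sum_pt1 F s zero_le_one
lemma rhat_nonneg (N : ℕ) (s : ℕ × ℕ) : 0 ≤ rhat N s := by
  unfold rhat; split_ifs <;> norm_num

lemma exists_value (N : ℕ) {lam : ℝ} (h0 : 0 ≤ lam) (h1 : lam < 1) (d : ℕ × ℕ → Lab) :
    ∃ v : ℕ × ℕ → ℝ, IsValue N lam d v ∧ ∀ s, 0 ≤ v s := by
  classical
  let ι := {x // x ∈ ShatF N}
  let T : (ι → ℝ) → (ι → ℝ) := fun v i =>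
    rhat N i.1 + lam * ∑ j : ι, Phat N i.1 (d i.1) j.1 * v j
  have hrow : ∀ (s : ℕ × ℕ), ∑ j : ι, Phat N s (d s) j.1 ≤ 1 := by
    intro s
    have := Phat_sum_le_one N s (d s) (ShatF N)
    rwa [← Finset.sum_coe_sort (ShatF N) (fun s' => Phat N s (d s) s')] at this
  have key : ∀ v w : ι → ℝ, dist (T v) (T w) ≤ lam * dist v w := by
    intro v w
    rw [dist_pi_le_iff (by positivity)]
    intro i
    rw [Real.dist_eq]
    have hexp : T v i - T w i =
        lam * ∑ j : ι, Phat N i.1 (d i.1) j.1 * (v j - w j) := by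
      have h2 : ∑ j : ι, Phat N i.1 (d i.1) j.1 * (v j - w j) =
          (∑ j : ι, Phat N i.1 (d i.1) j.1 * v j)
            - ∑ j : ι, Phat N i.1 (d i.1) j.1 * w j := by
        rw [← Finset.sum_sub_distrib]
        exact Finset.sum_congr rfl (fun j _ => by ring)
      rw [h2]; simp only [T]; ring
    rw [hexp, abs_mul, abs_of_nonneg h0]
    apply mul_le_mul_of_nonneg_left _ h0
    calc |∑ j : ι, Phat N i.1 (d i.1) j.1 * (v j - w j)|
        ≤ ∑ j : ι, |Phat N i.1 (d i.1) j.1 * (v j - w j)| :=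
          Finset.abs_sum_le_sum_abs _ _
      _ ≤ ∑ j : ι, Phat N i.1 (d i.1) j.1 * dist v w := by
          apply Finset.sum_le_sum; intro j _
          rw [abs_mul, abs_of_nonneg (Phat_nonneg N i.1 (d i.1) j.1)]
          exact mul_le_mul_of_nonneg_left
            (by rw [← Real.dist_eq]; exact dist_le_pi_dist v w j)
            (Phat_nonneg N i.1 (d i.1) j.1)
      _ = (∑ j : ι, Phat N i.1 (d i.1) j.1) * dist v w := by rw [Finset.sum_mul]
      _ ≤ 1 * dist v w := mul_le_mul_of_nonneg_right (hrow i.1) dist_nonneg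
      _ = dist v w := one_mul _
  have cw : ContractingWith ⟨lam, h0⟩ T := by
    constructor
    · exact_mod_cast h1
    · exact LipschitzWith.of_dist_le_mul key
  let fix := ContractingWith.fixedPoint T cw
  have hfix : T fix = fix := cw.fixedPoint_isFixedPt
  have hiter : ∀ n : ℕ, ∀ i : ι, 0 ≤ (T^[n] (fun _ => 0)) i := by
    intro n
    induction n with
    | zero => intro i; simp
    | succ n ih =>
      intro i
      rw [Function.iterate_succ_apply']
      have hs : 0 ≤ ∑ j : ι, Phat N i.1 (d i.1) j.1 * (T^[n] (fun _ => 0)) j :=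
        Finset.sum_nonneg fun j _ => mul_nonneg (Phat_nonneg N i.1 (d i.1) j.1) (ih j)
      have := rhat_nonneg N i.1
      have := mul_nonneg h0 hs
      show 0 ≤ rhat N i.1 + lam * ∑ j : ι, Phat N i.1 (d i.1) j.1 * (T^[n] (fun _ => 0)) j
      linarith
  have hnnfix : ∀ i : ι, 0 ≤ fix i := by
    intro i
    have ht : Filter.Tendsto (fun n => T^[n] (fun _ => 0)) Filter.atTop (nhds fix) :=
      cw.tendsto_iterate_fixedPoint (fun _ => 0)
    have ht2 : Filter.Tendsto (fun n => (T^[n] (fun _ => 0)) i) Filter.atTop (nhds (fix i)) :=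
      (continuous_apply i).continuousAt.tendsto.comp ht
    exact ge_of_tendsto' ht2 (fun n => hiter n i)
  refine ⟨fun s => if h : s ∈ ShatF N then fix ⟨s, h⟩ else 0, ?_, ?_⟩
  · intro s hs
    have h1' : (fun s => if h : s ∈ ShatF N then fix ⟨s, h⟩ else 0) s = fix ⟨s, hs⟩ :=
      dif_pos hs
    have h2' : ∑ s' ∈ ShatF N, Phat N s (d s) s' *
        (if h : s' ∈ ShatF N then fix ⟨s', h⟩ else 0) =
        ∑ j : ι, Phat N s (d s) j.1 * fix j := by
      rw [← Finset.sum_coe_sort (ShatF N)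
        (fun s' => Phat N s (d s) s' * (if h : s' ∈ ShatF N then fix ⟨s', h⟩ else 0))]
      exact Finset.sum_congr rfl (fun j _ => by rw [dif_pos j.2])
    rw [h1', h2']
    exact (congrFun hfix ⟨s, hs⟩).symm
  · intro s
    by_cases h : s ∈ ShatF N
    · simp only [dif_pos h]; exact hnnfix ⟨s, h⟩
    · simp [h]
/-- An explicit decision rule moving toward `(N,N)`. -/
def drule (N : ℕ) (s : ℕ × ℕ) : Lab :=
  if s = (0, 0) ∨ s = (N, N) then Lab.zero
  else if s.1 = N then Lab.a11
  else if s.2 = N then Lab.a21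
  else Lab.a0

lemma mem_ShatF (N : ℕ) {s : ℕ × ℕ} (h : ShatP N s) : s ∈ ShatF N := by
  rw [ShatF, Finset.mem_filter, Finset.mem_product, Finset.mem_range, Finset.mem_range]
  refine ⟨⟨?_, ?_⟩, h⟩ <;>
  · rcases h with ⟨h1, h2⟩ | h1
    · rcases h1 with (⟨_, _⟩ | _) <;> rcases h2 with (⟨_, _⟩ | _) <;> omega
    · rw [h1]; simp

lemma drule_isRule (N : ℕ) (hN : 7 ≤ N) : IsRule N (drule N) := by
  intro s hs
  unfold ActOK drule
  by_cases h : s = (0, 0) ∨ s = (N, N)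
  · rw [if_pos h, if_pos h]
  · rw [if_neg h, if_neg h]
    have hg : goodIdx N s.1 ∧ goodIdx N s.2 := by
      rcases hs with h' | h'
      · exact h'
      · exact absurd (Or.inl h') h
    obtain ⟨hg1, hg2⟩ := hg
    rw [goodIdx] at hg1 hg2
    by_cases h1 : s.1 = N
    · rw [if_pos h1]
      have hs2 : s.2 ≠ N := fun hc => h (Or.inr (Prod.ext h1 hc))
      constructor <;> omega
    · rw [if_neg h1]
      by_cases h2 : s.2 = N
      · rw [if_pos h2]
        constructor <;> omega
      · rw [if_neg h2]
        constructor <;> omega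

lemma pos_of_term (N : ℕ) {lam : ℝ} (hl0 : 0 < lam) (v : ℕ × ℕ → ℝ)
    (hnn : ∀ s, 0 ≤ v s) (s : ℕ × ℕ) (a : Lab)
    (heq : v s = rhat N s + lam * ∑ s' ∈ ShatF N, Phat N s a s' * v s')
    (s'' : ℕ × ℕ) (hF : s'' ∈ ShatF N) (hP : 0 < Phat N s a s'') (hV : 0 < v s'') :
    0 < v s := by
  have h1 : Phat N s a s'' * v s'' ≤ ∑ s' ∈ ShatF N, Phat N s a s' * v s' :=
    Finset.single_le_sum (fun i _ => mul_nonneg (Phat_nonneg N s a i) (hnn i)) hF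
  have h2 : 0 < Phat N s a s'' * v s'' := mul_pos hP hV
  have h3 := rhat_nonneg N s
  nlinarith

lemma value_pos (N : ℕ) (hN : 7 ≤ N) {lam : ℝ} (hl0 : 0 < lam) (hl1 : lam < 1)
    (v : ℕ × ℕ → ℝ) (hv : IsValue N lam (drule N) v) (hnn : ∀ s, 0 ≤ v s) :
    ∀ s, ShatP N s → s ≠ (0, 0) → 0 < v s := by
  suffices H : ∀ k s, (N - s.1) + (N - s.2) = k → ShatP N s → s ≠ (0, 0) → 0 < v s by
    intro s; exact H _ s rfl
  intro k
  induction k using Nat.strong_induction_on with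
  | _ k ih =>
  rintro ⟨i, j⟩ hk hs hs0
  have hg : goodIdx N i ∧ goodIdx N j := by
    rcases hs with h' | h'
    · exact h'
    · exact absurd h' hs0
  obtain ⟨hg1, hg2⟩ := hg
  rw [goodIdx] at hg1 hg2
  have hmem : (i, j) ∈ ShatF N := mem_ShatF N hs
  have heq := hv (i, j) hmem
  by_cases hNN : (i, j) = ((N : ℕ), (N : ℕ))
  · -- absorbing reward state
    rw [hNN] at heq ⊢
    have hdr : drule N (N, N) = Lab.zero := by
      rw [drule, if_pos (Or.inr rfl)]
    rw [hdr] at heq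
    simp only [Phat] at heq
    rw [show ∑ s' ∈ ShatF N, (if s' = ((N : ℕ), (N : ℕ)) then (1:ℝ) else 0) * v s' =
        ∑ s' ∈ ShatF N, (if s' = ((N : ℕ), (N : ℕ)) then v s' else 0) from
        Finset.sum_congr rfl (fun x _ => by split_ifs <;> simp),
      Finset.sum_ite_eq' (ShatF N) _ v, if_pos (by rw [← hNN]; exact hmem)] at heq
    have hr : rhat N (N, N) = 1 := by simp [rhat]
    rw [hr] at heq
    have := hnn ((N : ℕ), (N : ℕ))
    nlinarith
  have hne : ¬(i = N ∧ j = N) := by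
    intro ⟨ha, hb⟩; exact hNN (by rw [ha, hb])
  have hdr0 : ¬((i, j) = ((0:ℕ), (0:ℕ)) ∨ (i, j) = ((N:ℕ), (N:ℕ))) := by
    rintro (h | h)
    · exact hs0 h
    · exact hNN h
  by_cases h1 : i = N
  · -- action a11, j ∈ [2, N-2]
    have hj : 2 ≤ j ∧ j ≤ N - 2 := by
      rcases hg2 with h | h
      · exact h
      · exact absurd ⟨h1, h⟩ hne
    have hdr : drule N (i, j) = Lab.a11 := by
      rw [drule, if_neg hdr0, if_pos h1]
    rw [hdr] at heq
    by_cases hj3 : j ≤ N - 3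
    · have hsp : ShatP N (i, j + 1) :=
        Or.inl ⟨Or.inr h1, Or.inl (by omega)⟩
      have hP : (0:ℝ) < Phat N (i, j) Lab.a11 (i, j + 1) := by
        show (0:ℝ) < ker11 N (i, j) (i, j + 1)
        unfold ker11
        rw [if_pos (show (i, j).2 ≤ N - 3 from hj3),
          if_neg (by simp only [Prod.mk.injEq]; omega), if_pos (by simp [swp])]
        norm_num
      have hV : 0 < v (i, j + 1) :=
        ih ((N - i) + (N - (j + 1))) (by omega) (i, j + 1) rfl hsp
          (by simp only [ne_eq, Prod.mk.injEq, not_and]; omega)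
      exact pos_of_term N hl0 v hnn (i, j) Lab.a11 heq (i, j + 1) (mem_ShatF N hsp) hP hV
    · have hsp : ShatP N (i, (N:ℕ)) := Or.inl ⟨Or.inr h1, Or.inr rfl⟩
      have hP : (0:ℝ) < Phat N (i, j) Lab.a11 (i, N) := by
        show (0:ℝ) < ker11 N (i, j) (i, N)
        unfold ker11
        rw [if_neg (show ¬ (i, j).2 ≤ N - 3 from hj3),
          if_pos (show (i, j).2 = N - 2 by omega),
          if_neg (by simp only [Prod.mk.injEq]; omega), if_pos (by simp [swp])]
        norm_num
      have hV : 0 < v (i, N) :=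
        ih ((N - i) + (N - N)) (by omega) (i, N) rfl hsp
          (by simp only [ne_eq, Prod.mk.injEq, not_and]; omega)
      exact pos_of_term N hl0 v hnn (i, j) Lab.a11 heq (i, N) (mem_ShatF N hsp) hP hV
  by_cases h2 : j = N
  · -- action a21, i ∈ [2, N-2]
    have hi : 2 ≤ i ∧ i ≤ N - 2 := by
      rcases hg1 with h | h
      · exact h
      · exact absurd h h1
    have hdr : drule N (i, j) = Lab.a21 := by
      rw [drule, if_neg hdr0, if_neg h1, if_pos h2]
    rw [hdr] at heq
    by_cases hi3 : i ≤ N - 3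
    · have hsp : ShatP N (i + 1, (j:ℕ)) :=
        Or.inl ⟨Or.inl (by omega), Or.inr h2⟩
      have hP : (0:ℝ) < Phat N (i, j) Lab.a21 (i + 1, j) := by
        show (0:ℝ) < ker11 N (swp (i, j)) (swp (i + 1, j))
        unfold ker11
        rw [if_pos (show (swp (i, j)).2 ≤ N - 3 from hi3),
          if_neg (by simp only [swp, Prod.mk.injEq]; omega), if_pos (by simp [swp])]
        norm_num
      have hV : 0 < v (i + 1, j) :=
        ih ((N - (i + 1)) + (N - j)) (by omega) (i + 1, j) rfl hsp
          (by simp only [ne_eq, Prod.mk.injEq, not_and]; omega)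
      exact pos_of_term N hl0 v hnn (i, j) Lab.a21 heq (i + 1, j) (mem_ShatF N hsp) hP hV
    · have hsp : ShatP N ((N:ℕ), (N:ℕ)) := Or.inl ⟨Or.inr rfl, Or.inr rfl⟩
      have hP : (0:ℝ) < Phat N (i, j) Lab.a21 (N, N) := by
        show (0:ℝ) < ker11 N (swp (i, j)) (swp (N, N))
        unfold ker11
        rw [if_neg (show ¬ (swp (i, j)).2 ≤ N - 3 from hi3),
          if_pos (show (swp (i, j)).2 = N - 2 by
            simp only [swp]; rcases hg1 with h | h; omega; exact absurd h h1),
          if_neg (by simp only [swp, Prod.mk.injEq]; omega), if_pos (by simp [swp, h2])]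
        norm_num
      have hV : 0 < v ((N:ℕ), (N:ℕ)) :=
        ih ((N - N) + (N - N)) (by omega) (N, N) rfl hsp
          (by simp only [ne_eq, Prod.mk.injEq, not_and]; omega)
      exact pos_of_term N hl0 v hnn (i, j) Lab.a21 heq (N, N) (mem_ShatF N hsp) hP hV
  -- action a0, i, j ∈ [2, N-2]
  have hi : 2 ≤ i ∧ i ≤ N - 2 := by
    rcases hg1 with h | h
    · exact h
    · exact absurd h h1
  have hj : 2 ≤ j ∧ j ≤ N - 2 := by
    rcases hg2 with h | h
    · exact h
    · exact absurd h h2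
  have hdr : drule N (i, j) = Lab.a0 := by
    rw [drule, if_neg hdr0, if_neg h1, if_neg h2]
  rw [hdr] at heq
  by_cases hi3 : i ≤ N - 3
  · by_cases hj3 : j ≤ N - 3
    · have hsp : ShatP N (i + 1, j + 1) :=
        Or.inl ⟨Or.inl (by omega), Or.inl (by omega)⟩
      have hP : (0:ℝ) < Phat N (i, j) Lab.a0 (i + 1, j + 1) := by
        show (0:ℝ) < ker0 N (i, j) (i + 1, j + 1)
        unfold ker0
        rw [if_pos (show (i, j).1 ≤ N - 3 ∧ (i, j).2 ≤ N - 3 from ⟨hi3, hj3⟩),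
          if_neg (by simp only [Prod.mk.injEq]; omega),
          if_neg (by simp only [Prod.mk.injEq]; omega),
          if_neg (by simp only [Prod.mk.injEq]; omega), if_pos (by simp [swp])]
        norm_num
      have hV : 0 < v (i + 1, j + 1) :=
        ih ((N - (i + 1)) + (N - (j + 1))) (by omega) (i + 1, j + 1) rfl hsp
          (by simp only [ne_eq, Prod.mk.injEq, not_and]; omega)
      exact pos_of_term N hl0 v hnn (i, j) Lab.a0 heq (i + 1, j + 1) (mem_ShatF N hsp) hP hV
    · have hsp : ShatP N (i + 1, (N:ℕ)) :=
        Or.inl ⟨Or.inl (by omega), Or.inr rfl⟩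
      have hP : (0:ℝ) < Phat N (i, j) Lab.a0 (i + 1, N) := by
        show (0:ℝ) < ker0 N (i, j) (i + 1, N)
        unfold ker0
        rw [if_neg (show ¬((i, j).1 ≤ N - 3 ∧ (i, j).2 ≤ N - 3) by
            simp only; omega),
          if_pos (show (i, j).1 ≤ N - 3 ∧ (i, j).2 = N - 2 from ⟨hi3, by omega⟩),
          if_neg (by simp only [Prod.mk.injEq]; omega),
          if_neg (by simp only [Prod.mk.injEq]; omega),
          if_neg (by simp only [Prod.mk.injEq]; omega), if_pos (by simp [swp])]
        norm_num
      have hV : 0 < v (i + 1, N) :=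
        ih ((N - (i + 1)) + (N - N)) (by omega) (i + 1, N) rfl hsp
          (by simp only [ne_eq, Prod.mk.injEq, not_and]; omega)
      exact pos_of_term N hl0 v hnn (i, j) Lab.a0 heq (i + 1, N) (mem_ShatF N hsp) hP hV
  · by_cases hj3 : j ≤ N - 3
    · have hsp : ShatP N ((N:ℕ), j + 1) :=
        Or.inl ⟨Or.inr rfl, Or.inl (by omega)⟩
      have hP : (0:ℝ) < Phat N (i, j) Lab.a0 (N, j + 1) := by
        show (0:ℝ) < ker0 N (i, j) (N, j + 1)
        unfold ker0
        rw [if_neg (show ¬((i, j).1 ≤ N - 3 ∧ (i, j).2 ≤ N - 3) by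
            simp only; omega),
          if_neg (show ¬((i, j).1 ≤ N - 3 ∧ (i, j).2 = N - 2) by
            simp only; omega),
          if_pos (show (i, j).1 = N - 2 ∧ (i, j).2 ≤ N - 3 from ⟨by omega, hj3⟩),
          if_neg (by simp only [Prod.mk.injEq]; omega),
          if_neg (by simp only [Prod.mk.injEq]; omega),
          if_neg (by simp only [Prod.mk.injEq]; omega), if_pos (by simp [swp])]
        norm_num
      have hV : 0 < v (N, j + 1) :=
        ih ((N - N) + (N - (j + 1))) (by omega) (N, j + 1) rfl hsp
          (by simp only [ne_eq, Prod.mk.injEq, not_and]; omega)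
      exact pos_of_term N hl0 v hnn (i, j) Lab.a0 heq (N, j + 1) (mem_ShatF N hsp) hP hV
    · have hsp : ShatP N ((N:ℕ), (N:ℕ)) := Or.inl ⟨Or.inr rfl, Or.inr rfl⟩
      have hP : (0:ℝ) < Phat N (i, j) Lab.a0 (N, N) := by
        show (0:ℝ) < ker0 N (i, j) (N, N)
        unfold ker0
        rw [if_neg (show ¬((i, j).1 ≤ N - 3 ∧ (i, j).2 ≤ N - 3) by
            simp only; omega),
          if_neg (show ¬((i, j).1 ≤ N - 3 ∧ (i, j).2 = N - 2) by
            simp only; omega),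
          if_neg (show ¬((i, j).1 = N - 2 ∧ (i, j).2 ≤ N - 3) by
            simp only; omega),
          if_pos (show (i, j).1 = N - 2 ∧ (i, j).2 = N - 2 from ⟨by omega, by omega⟩),
          if_neg (by simp only [Prod.mk.injEq]; omega),
          if_neg (by simp only [Prod.mk.injEq]; omega),
          if_neg (by simp only [Prod.mk.injEq]; omega), if_pos (by simp [swp])]
        norm_num
      have hV : 0 < v ((N:ℕ), (N:ℕ)) :=
        ih ((N - N) + (N - N)) (by omega) (N, N) rfl hsp
          (by simp only [ne_eq, Prod.mk.injEq, not_and]; omega)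
      exact pos_of_term N hl0 v hnn (i, j) Lab.a0 heq (N, N) (mem_ShatF N hsp) hP hV
/-- no optimal decision rule selects the action `0` at a state
other than `(0,0)` and `(N,N)`. -/
theorem optimal_never_zero (N : ℕ) (hN : 7 ≤ N)
    (lam : ℝ) (hl0 : 0 < lam) (hl1 : lam < 1)
    (d : ℕ × ℕ → Lab) (hd : IsOptimal N lam d) :
    ∀ s : ℕ × ℕ, ShatP N s → s ≠ (0, 0) → s ≠ (N, N) → d s ≠ Lab.zero := by
  intro s hs hs0 hsN hzero
  obtain ⟨vd, hvd, _⟩ := exists_value N hl0.le hl1 d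
  obtain ⟨v', hv', hv'nn⟩ := exists_value N hl0.le hl1 (drule N)
  have hle := hd.2 vd hvd (drule N) (drule_isRule N hN) v' hv' s hs
  have hpos : 0 < v' s := value_pos N hN hl0 hl1 v' hv' hv'nn s hs hs0
  have hmem : s ∈ ShatF N := mem_ShatF N hs
  have heq := hvd s hmem
  rw [hzero] at heq
  simp only [Phat] at heq
  rw [show ∑ s' ∈ ShatF N, (if s' = s then (1:ℝ) else 0) * vd s' =
      ∑ s' ∈ ShatF N, (if s' = s then vd s' else 0) from
      Finset.sum_congr rfl (fun x _ => by split_ifs <;> simp),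
    Finset.sum_ite_eq' (ShatF N) _ vd, if_pos hmem] at heq
  have hr : rhat N s = 0 := by rw [rhat, if_neg hsN]
  rw [hr] at heq
  have hz : vd s * (1 - lam) = 0 := by linarith [heq]
  rcases mul_eq_zero.mp hz with h | h
  · rw [h] at hle; linarith
  · linarith

end AuxMDP
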